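/- Let (α_1, …, α_r) and (β_1, …, β_m) be tuples of positive integers with r ≥ 1, m ≥ 1 and α_r ≥ 2. Then Z_U(α_1, …, α_r; β_1, …, β_m) = Z_B(α_1, …, α_r; β_1, …, β_m) + Z_B(β_1, α_1, …, α_r; β_2, …, β_m). -/

import Mathlib

open scoped BigOperators

/-- The multiple zeta value `ζ(a₁, …, a_r)`, as a sum over strictly increasing
tuples of positive integers. -/
noncomputable def mz (a : List ℕ) : ℝ :=
  ∑' k : {k : Fin a.length → ℕ+ // StrictMono k},
    ∏ i, (1 : ℝ) / ((k.1 i : ℕ) : ℝ) ^ a.get i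

/-- The multiple zeta-star value `ζ⋆(a₁, …, a_r)`, as a sum over weakly increasing
tuples of positive integers. -/
noncomputable def mzs (a : List ℕ) : ℝ :=
  ∑' k : {k : Fin a.length → ℕ+ // Monotone k},
    ∏ i, (1 : ℝ) / ((k.1 i : ℕ) : ℝ) ^ a.get i

/-- `Z_U(α; β)`: sum over `1 ≤ k₁ < ⋯ < k_r` and `1 ≤ ℓ₁ ≤ ⋯ ≤ ℓ_m ≤ k_r` of
`k₁^{-α₁} ⋯ k_r^{-α_r} ℓ₁^{-β₁} ⋯ ℓ_m^{-β_m}` (the `ℓ`-sum is `1` when `m = 0`). -/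
noncomputable def ZU (a b : List ℕ) : ℝ :=
  ∑' p : {p : (Fin a.length → ℕ+) × (Fin b.length → ℕ+) //
      StrictMono p.1 ∧ Monotone p.2 ∧
      ∀ (i : Fin a.length) (j : Fin b.length), i.1 = a.length - 1 → p.2 j ≤ p.1 i},
    (∏ i, (1 : ℝ) / ((p.1.1 i : ℕ) : ℝ) ^ a.get i) *
      ∏ j, (1 : ℝ) / ((p.1.2 j : ℕ) : ℝ) ^ b.get j

/-- `Z_L(α; β)`: sum over `1 ≤ k₁ < ⋯ < k_r` and `k₁ ≤ ℓ₁ ≤ ⋯ ≤ ℓ_m` of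
`k₁^{-α₁} ⋯ k_r^{-α_r} ℓ₁^{-β₁} ⋯ ℓ_m^{-β_m}` (the `ℓ`-sum is `1` when `m = 0`). -/
noncomputable def ZL (a b : List ℕ) : ℝ :=
  ∑' p : {p : (Fin a.length → ℕ+) × (Fin b.length → ℕ+) //
      StrictMono p.1 ∧ Monotone p.2 ∧
      ∀ (i : Fin a.length) (j : Fin b.length), i.1 = 0 → p.1 i ≤ p.2 j},
    (∏ i, (1 : ℝ) / ((p.1.1 i : ℕ) : ℝ) ^ a.get i) *
      ∏ j, (1 : ℝ) / ((p.1.2 j : ℕ) : ℝ) ^ b.get j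

/-- `Z_B(α; β)`: sum over `1 ≤ k₁ < ⋯ < k_r` and `k₁ ≤ ℓ₁ ≤ ⋯ ≤ ℓ_m ≤ k_r` of
`k₁^{-α₁} ⋯ k_r^{-α_r} ℓ₁^{-β₁} ⋯ ℓ_m^{-β_m}` (the `ℓ`-sum is `1` when `m = 0`). -/
noncomputable def ZB (a b : List ℕ) : ℝ :=
  ∑' p : {p : (Fin a.length → ℕ+) × (Fin b.length → ℕ+) //
      StrictMono p.1 ∧ Monotone p.2 ∧
      (∀ (i : Fin a.length) (j : Fin b.length), i.1 = 0 → p.1 i ≤ p.2 j) ∧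
      ∀ (i : Fin a.length) (j : Fin b.length), i.1 = a.length - 1 → p.2 j ≤ p.1 i},
    (∏ i, (1 : ℝ) / ((p.1.1 i : ℕ) : ℝ) ^ a.get i) *
      ∏ j, (1 : ℝ) / ((p.1.2 j : ℕ) : ℝ) ^ b.get j

/-!
Split the sum defining `Z_U` according to whether `k₁ ≤ ℓ₁` or `ℓ₁ < k₁`. The first part is
exactly `Z_B(α; β)`. In the second, `ℓ₁ < k₁ < ⋯ < k_r` is a strictly increasing chain carrying
the exponents `(β₁, α₁, …, α_r)`, and `ℓ₁ ≤ ℓ₂ ≤ ⋯ ≤ ℓ_m ≤ k_r`, so it is `Z_B(β₁, α; β₂, …, β_m)`.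

Since a real `tsum` of a non-summable family is `0`, the splitting needs the convergence of `Z_U`,
which is where `α_r ≥ 2` enters: every index is at most `n = k_r`, so with `ε = 1/(r + m)`
each factor `x^{-c}` other than `k_r^{-α_r}` is at most `n^ε x^{-1-ε}`, and the `r + m - 1` factors
`n^ε` together with `n^{-α_r} ≤ n^{-2}` leave at most `n^{-1-ε}`; hence the summand is dominated by
the product of the summable `x^{-1-ε}` over all indices.
-/

open Finset

lemma Fin.monotone_cons_of_forall_le {α : Type*} [Preorder α] {n : ℕ} {x : α} {f : Fin n → α}
    (hf : Monotone f) (hx : ∀ i, x ≤ f i) : Monotone (Fin.cons x f : Fin (n + 1) → α) := by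
  cases n with
  | zero => exact fun i j _ => by rw [Subsingleton.elim (α := Fin 1) i j]
  | succ n => exact hf.vecCons (hx 0)

lemma Fin.forall_val_eq_imp_iff {n : ℕ} {p : Fin (n + 1) → Prop} :
    (∀ i : Fin (n + 1), i.1 = n → p i) ↔ p (Fin.last n) := by
  refine ⟨fun h => h _ rfl, fun h i hi => ?_⟩
  obtain rfl : i = Fin.last n := Fin.ext hi
  exact h

lemma Summable.tsum_union_disjoint_of_union {α β : Type*} [AddCommGroup α] [UniformSpace α]
    [IsUniformAddGroup α] [CompleteSpace α] [T2Space α] {f : β → α} {s t : Set β}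
    (hd : Disjoint s t) (h : Summable (f ∘ (↑) : ↑(s ∪ t) → α)) :
    ∑' x : ↑(s ∪ t), f x = ∑' x : s, f x + ∑' x : t, f x :=
  (h.comp_injective (Set.inclusion_injective Set.subset_union_left)).tsum_union_disjoint hd
    (h.comp_injective (Set.inclusion_injective Set.subset_union_right))

lemma summable_prod_comp {β : Type*} {g : β → ℝ} (hg0 : ∀ x, 0 ≤ g x) (hg : Summable g) :
    ∀ n, Summable fun k : Fin n → β => ∏ i, g (k i)
  | 0 => Summable.of_finite
  | n + 1 => by
    have hprod := hg.mul_of_nonneg (summable_prod_comp hg0 hg n) hg0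
      fun k => prod_nonneg fun i _ => hg0 (k i)
    refine (Fin.consEquiv fun _ => β).summable_iff.mp (hprod.congr fun p => ?_)
    simp [Fin.prod_univ_succ]

lemma one_div_pow_le_rpow_mul_rpow {x n ε : ℝ} {c : ℕ} (hx : 1 ≤ x) (hxn : x ≤ n) (hε : 0 ≤ ε)
    (hc : 1 ≤ c) : 1 / x ^ c ≤ n ^ ε * x ^ (-(1 + ε)) := by
  have hx0 : 0 < x := by linarith
  calc 1 / x ^ c ≤ 1 / x := one_div_le_one_div_of_le hx0 (le_self_pow₀ hx (by omega))
    _ = x ^ ε * x ^ (-(1 + ε)) := by rw [← Real.rpow_add hx0]; simp [Real.rpow_neg_one]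
    _ ≤ n ^ ε * x ^ (-(1 + ε)) := by gcongr

section

variable {r m : ℕ}

noncomputable def zTerm (a : Fin r → ℕ) (b : Fin m → ℕ) (p : (Fin r → ℕ+) × (Fin m → ℕ+)) :
    ℝ :=
  (∏ i, (1 : ℝ) / ((p.1 i : ℕ) : ℝ) ^ a i) * ∏ j, (1 : ℝ) / ((p.2 j : ℕ) : ℝ) ^ b j

def upperTuples (r m : ℕ) : Set ((Fin r → ℕ+) × (Fin m → ℕ+)) :=
  {p | StrictMono p.1 ∧ Monotone p.2 ∧ ∀ i j, i.1 = r - 1 → p.2 j ≤ p.1 i}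

def boundedTuples (r m : ℕ) : Set ((Fin r → ℕ+) × (Fin m → ℕ+)) :=
  {p | StrictMono p.1 ∧ Monotone p.2 ∧ (∀ i j, i.1 = 0 → p.1 i ≤ p.2 j) ∧
    ∀ i j, i.1 = r - 1 → p.2 j ≤ p.1 i}

-- `(List.ofFn a).length = r` holds only propositionally, hence the transport along `Fin.cast`.
lemma tsum_zTerm_congr_length (S : ∀ r m, Set ((Fin r → ℕ+) × (Fin m → ℕ+)))
    {r' m' : ℕ} (hr : r' = r) (hm : m' = m) {a' : Fin r' → ℕ} {b' : Fin m' → ℕ}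
    {a : Fin r → ℕ} {b : Fin m → ℕ}
    (ha : ∀ i, a' i = a (Fin.cast hr i)) (hb : ∀ j, b' j = b (Fin.cast hm j)) :
    ∑' p : S r' m', zTerm a' b' p = ∑' p : S r m, zTerm a b p := by
  subst hr hm
  obtain rfl : a' = a := funext ha
  obtain rfl : b' = b := funext hb
  rfl

lemma ZU_ofFn (a : Fin r → ℕ) (b : Fin m → ℕ) :
    ZU (List.ofFn a) (List.ofFn b) = ∑' p : upperTuples r m, zTerm a b p :=
  tsum_zTerm_congr_length upperTuples _ _ (List.get_ofFn a) (List.get_ofFn b)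

lemma ZB_ofFn (a : Fin r → ℕ) (b : Fin m → ℕ) :
    ZB (List.ofFn a) (List.ofFn b) = ∑' p : boundedTuples r m, zTerm a b p :=
  tsum_zTerm_congr_length boundedTuples _ _ (List.get_ofFn a) (List.get_ofFn b)

lemma mem_upperTuples_succ {k : Fin (r + 1) → ℕ+} {l : Fin m → ℕ+} :
    (k, l) ∈ upperTuples (r + 1) m ↔ StrictMono k ∧ Monotone l ∧ ∀ j, l j ≤ k (Fin.last r) := by
  simp only [upperTuples, Set.mem_ofPred_eq, Nat.add_sub_cancel, forall_comm (α := Fin (r + 1)),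
    Fin.forall_val_eq_imp_iff]

lemma mem_boundedTuples_succ {k : Fin (r + 1) → ℕ+} {l : Fin m → ℕ+} :
    (k, l) ∈ boundedTuples (r + 1) m ↔
      StrictMono k ∧ Monotone l ∧ ∀ j, k 0 ≤ l j ∧ l j ≤ k (Fin.last r) := by
  simp only [boundedTuples, Set.mem_ofPred_eq, Nat.add_sub_cancel, Fin.val_eq_zero_iff,
    forall_comm (α := Fin (r + 1)), Fin.forall_val_eq_imp_iff, forall_eq, forall_and]

def moveHeadEquiv (α : Type*) (r m : ℕ) :
    (Fin (r + 1) → α) × (Fin (m + 1) → α) ≃ (Fin (r + 2) → α) × (Fin m → α) where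
  toFun p := (Fin.cons (p.2 0) p.1, Fin.tail p.2)
  invFun q := (Fin.tail q.1, Fin.cons (q.1 0) q.2)
  left_inv p := by simp
  right_inv q := by simp

lemma mem_boundedTuples_iff_of_le {k : Fin (r + 1) → ℕ+} {l : Fin (m + 1) → ℕ+} :
    (k, l) ∈ boundedTuples (r + 1) (m + 1) ↔
      (k, l) ∈ upperTuples (r + 1) (m + 1) ∧ k 0 ≤ l 0 := by
  rw [mem_boundedTuples_succ, mem_upperTuples_succ]
  constructor
  · rintro ⟨hk, hl, hkl⟩
    exact ⟨⟨hk, hl, fun j => (hkl j).2⟩, (hkl 0).1⟩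
  · rintro ⟨⟨hk, hl, hlk⟩, h0⟩
    exact ⟨hk, hl, fun j => ⟨h0.trans (hl (Fin.zero_le j)), hlk j⟩⟩

lemma moveHeadEquiv_mem_boundedTuples_iff {k : Fin (r + 1) → ℕ+} {l : Fin (m + 1) → ℕ+} :
    moveHeadEquiv ℕ+ r m (k, l) ∈ boundedTuples (r + 2) m ↔
      (k, l) ∈ upperTuples (r + 1) (m + 1) ∧ l 0 < k 0 := by
  have hcons : StrictMono (Fin.cons (l 0) k : Fin (r + 2) → ℕ+) ↔ l 0 < k 0 ∧ StrictMono k :=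
    strictMono_vecCons
  rw [moveHeadEquiv, Equiv.coe_fn_mk, mem_boundedTuples_succ, mem_upperTuples_succ, hcons]
  simp only [Fin.cons_zero, ← Fin.succ_last, Fin.cons_succ, Fin.tail]
  constructor
  · rintro ⟨⟨h0, hk⟩, hl, hlk⟩
    refine ⟨⟨hk, ?_, fun j => ?_⟩, h0⟩
    · rw [← Fin.cons_self_tail l]
      exact Fin.monotone_cons_of_forall_le hl fun j => (hlk j).1
    · cases j using Fin.cases with
      | zero => exact h0.le.trans (hk.monotone (Fin.zero_le _))
      | succ j => exact (hlk j).2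
  · rintro ⟨⟨hk, hl, hlk⟩, h0⟩
    exact ⟨⟨h0, hk⟩, fun i j hij => hl (Fin.succ_le_succ_iff.mpr hij),
      fun j => ⟨hl (Fin.zero_le _), hlk _⟩⟩

lemma upperTuples_eq_union :
    upperTuples (r + 1) (m + 1) =
      boundedTuples (r + 1) (m + 1) ∪ moveHeadEquiv ℕ+ r m ⁻¹' boundedTuples (r + 2) m := by
  ext ⟨k, l⟩
  rw [Set.mem_union, Set.mem_preimage, mem_boundedTuples_iff_of_le,
    moveHeadEquiv_mem_boundedTuples_iff, ← and_or_left, iff_self_and]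
  exact fun _ => le_or_gt (k 0) (l 0)

lemma disjoint_boundedTuples_preimage_moveHeadEquiv :
    Disjoint (boundedTuples (r + 1) (m + 1))
      (moveHeadEquiv ℕ+ r m ⁻¹' boundedTuples (r + 2) m) := by
  rw [Set.disjoint_left]
  rintro ⟨k, l⟩ h₁ h₂
  rw [mem_boundedTuples_iff_of_le] at h₁
  rw [Set.mem_preimage, moveHeadEquiv_mem_boundedTuples_iff] at h₂
  exact h₁.2.not_gt h₂.2

lemma zTerm_moveHeadEquiv (a : Fin (r + 1) → ℕ) (b : Fin (m + 1) → ℕ)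
    (p : (Fin (r + 1) → ℕ+) × (Fin (m + 1) → ℕ+)) :
    zTerm (Fin.cons (b 0) a) (Fin.tail b) (moveHeadEquiv ℕ+ r m p) = zTerm a b p := by
  simp only [zTerm, moveHeadEquiv, Equiv.coe_fn_mk, Fin.prod_univ_succ (n := r + 1),
    Fin.prod_univ_succ (n := m), Fin.cons_zero, Fin.cons_succ, Fin.tail]
  ring

theorem tsum_upperTuples_eq_add (a : Fin (r + 1) → ℕ) (b : Fin (m + 1) → ℕ)
    (hsum : Summable fun p : upperTuples (r + 1) (m + 1) => zTerm a b p) :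
    ∑' p : upperTuples (r + 1) (m + 1), zTerm a b p =
      ∑' p : boundedTuples (r + 1) (m + 1), zTerm a b p +
        ∑' p : boundedTuples (r + 2) m, zTerm (Fin.cons (b 0) a) (Fin.tail b) p := by
  rw [upperTuples_eq_union] at hsum ⊢
  rw [Summable.tsum_union_disjoint_of_union (f := zTerm a b)
    disjoint_boundedTuples_preimage_moveHeadEquiv hsum]
  congr 1
  calc ∑' p : moveHeadEquiv ℕ+ r m ⁻¹' boundedTuples (r + 2) m, zTerm a b p
      = ∑' p : moveHeadEquiv ℕ+ r m ⁻¹' boundedTuples (r + 2) m,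
          zTerm (Fin.cons (b 0) a) (Fin.tail b) (moveHeadEquiv ℕ+ r m p) := by
        simp only [zTerm_moveHeadEquiv]
    _ = _ := ((moveHeadEquiv ℕ+ r m).subtypeEquiv fun _ => Iff.rfl).tsum_eq
          fun q : boundedTuples (r + 2) m => zTerm (Fin.cons (b 0) a) (Fin.tail b) q

lemma zTerm_le_prod_rpow {ε : ℝ} (hε : 0 ≤ ε) (hεrm : ε * (r + m + 1) ≤ 1)
    {a : Fin (r + 1) → ℕ} {b : Fin m → ℕ} (ha : ∀ i, 1 ≤ a i) (hb : ∀ j, 1 ≤ b j)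
    (har : 2 ≤ a (Fin.last r)) {k : Fin (r + 1) → ℕ+} {l : Fin m → ℕ+}
    (hk : ∀ i, k i ≤ k (Fin.last r)) (hl : ∀ j, l j ≤ k (Fin.last r)) :
    zTerm a b (k, l) ≤
      (∏ i, ((k i : ℕ) : ℝ) ^ (-(1 + ε))) * ∏ j, ((l j : ℕ) : ℝ) ^ (-(1 + ε)) := by
  set n : ℝ := ((k (Fin.last r) : ℕ) : ℝ)
  have hn : 1 ≤ n := Nat.one_le_cast.mpr (k _).pos
  have hle (x : ℕ+) (c : ℕ) (hc : 1 ≤ c) (hx : x ≤ k (Fin.last r)) :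
      1 / ((x : ℕ) : ℝ) ^ c ≤ n ^ ε * ((x : ℕ) : ℝ) ^ (-(1 + ε)) :=
    one_div_pow_le_rpow_mul_rpow (Nat.one_le_cast.mpr x.pos) (Nat.cast_le.mpr hx) hε hc
  have hlast : 1 / n ^ a (Fin.last r) ≤ n ^ (-2 : ℝ) := by
    rw [one_div, ← Real.rpow_natCast, ← Real.rpow_neg (by positivity)]
    exact Real.rpow_le_rpow_of_exponent_le hn
      (by exact_mod_cast (neg_le_neg (Nat.cast_le.mpr har)))
  have hexp : (n ^ ε) ^ r * (n ^ ε) ^ m * n ^ (-2 : ℝ) ≤ n ^ (-(1 + ε)) := by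
    rw [← Real.rpow_natCast, ← Real.rpow_natCast, ← Real.rpow_mul (by positivity),
      ← Real.rpow_mul (by positivity), ← Real.rpow_add (by positivity),
      ← Real.rpow_add (by positivity)]
    exact Real.rpow_le_rpow_of_exponent_le hn (by linarith)
  calc zTerm a b (k, l)
      = (∏ i : Fin r, 1 / ((k i.castSucc : ℕ) : ℝ) ^ a i.castSucc) * (1 / n ^ a (Fin.last r)) *
          ∏ j, 1 / ((l j : ℕ) : ℝ) ^ b j := by
        rw [zTerm, Fin.prod_univ_castSucc]
    _ ≤ (∏ i : Fin r, n ^ ε * ((k i.castSucc : ℕ) : ℝ) ^ (-(1 + ε))) * n ^ (-2 : ℝ) *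
          ∏ j, n ^ ε * ((l j : ℕ) : ℝ) ^ (-(1 + ε)) := by
        gcongr with i _ j _
        · exact hle _ _ (ha _) (hk _)
        · exact hle _ _ (hb _) (hl _)
    _ = (n ^ ε) ^ r * (n ^ ε) ^ m * n ^ (-2 : ℝ) *
          ((∏ i : Fin r, ((k i.castSucc : ℕ) : ℝ) ^ (-(1 + ε))) *
            ∏ j, ((l j : ℕ) : ℝ) ^ (-(1 + ε))) := by
        simp only [prod_mul_distrib, prod_const, card_univ, Fintype.card_fin]
        ring
    _ ≤ n ^ (-(1 + ε)) * ((∏ i : Fin r, ((k i.castSucc : ℕ) : ℝ) ^ (-(1 + ε))) *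
            ∏ j, ((l j : ℕ) : ℝ) ^ (-(1 + ε))) := by
        gcongr
    _ = _ := by
        rw [Fin.prod_univ_castSucc (f := fun i => ((k i : ℕ) : ℝ) ^ (-(1 + ε)))]
        ring

theorem summable_zTerm_upperTuples (a : Fin (r + 1) → ℕ) (b : Fin m → ℕ) (ha : ∀ i, 1 ≤ a i)
    (hb : ∀ j, 1 ≤ b j) (har : 2 ≤ a (Fin.last r)) :
    Summable fun p : upperTuples (r + 1) m => zTerm a b p := by
  set ε : ℝ := 1 / (r + m + 1)
  have hε : 0 < ε := by positivity
  have hεrm : ε * (r + m + 1) ≤ 1 := by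
    rw [one_div_mul_cancel (by positivity)]
  set g : ℕ+ → ℝ := fun x => ((x : ℕ) : ℝ) ^ (-(1 + ε))
  have hg0 : ∀ x, 0 ≤ g x := fun x => by positivity
  have hg : Summable g :=
    (Real.summable_nat_rpow.mpr (by linarith)).comp_injective (i := PNat.val) PNat.coe_injective
  have hdom := (summable_prod_comp hg0 hg (r + 1)).mul_of_nonneg (summable_prod_comp hg0 hg m)
    (fun k => prod_nonneg fun i _ => hg0 (k i)) (fun l => prod_nonneg fun j _ => hg0 (l j))
  refine Summable.of_nonneg_of_le (fun p => by unfold zTerm; positivity) (fun ⟨⟨k, l⟩, hp⟩ => ?_)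
    (hdom.subtype (upperTuples (r + 1) m))
  rw [mem_upperTuples_succ] at hp
  exact zTerm_le_prod_rpow hε.le hεrm ha hb har (fun i => hp.1.monotone (Fin.le_last i)) hp.2.2

end

/-- For tuples of positive integers with `r, m ≥ 1` and `α_r ≥ 2`:
`Z_U(α₁,…,α_r; β₁,…,β_m) = Z_B(α₁,…,α_r; β₁,…,β_m) + Z_B(β₁,α₁,…,α_r; β₂,…,β_m)`. -/
theorem ZU_eq_ZB_add_ZB (r m : ℕ) (hr : 1 ≤ r) (hm : 1 ≤ m)
    (a : Fin r → ℕ) (b : Fin m → ℕ)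
    (hapos : ∀ i, 1 ≤ a i) (hbpos : ∀ j, 1 ≤ b j)
    (har : 2 ≤ a ⟨r - 1, by omega⟩) :
    ZU (List.ofFn a) (List.ofFn b) =
      ZB (List.ofFn a) (List.ofFn b) +
      ZB (List.ofFn (Fin.cons (b ⟨0, by omega⟩) a))
         (List.ofFn (fun j : Fin (m - 1) => b ⟨j.1 + 1, by have := j.isLt; omega⟩)) := by
  obtain ⟨r, rfl⟩ : ∃ r', r = r' + 1 := ⟨r - 1, by omega⟩
  obtain ⟨m, rfl⟩ : ∃ m', m = m' + 1 := ⟨m - 1, by omega⟩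
  rw [ZU_ofFn, ZB_ofFn, ZB_ofFn]
  exact tsum_upperTuples_eq_add a b (summable_zTerm_upperTuples a b hapos hbpos har)
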